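/- Let N be a normal subgroup of a finite group G and let p be a prime. Let P_N, P_G, P_{G/N} be Sylow p-subgroups of N, G, and G/N respectively. Then: (i) exp(P_{G/N}/P'_{G/N}) ≤ exp(P_G/P'_G), and (ii) exp(P_G/P'_G) ≤ exp(P_N/P'_N) · exp(P_{G/N}/P'_{G/N}). -/

import Mathlib

open scoped Classical

noncomputable section

/-- The `f`-th cyclotomic field, realized as the subfield of `ℂ` generated by the
`f`-th roots of unity. -/
def cycField (f : ℕ) : Subfield ℂ :=
  Subfield.closure {z : ℂ | z ^ f = 1}

/-- The conductor of a complex-valued function on `G`: the smallest positive integer `f`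
such that all values lie in the `f`-th cyclotomic field. -/
def conductorOf {G : Type} (χ : G → ℂ) : ℕ :=
  sInf {f : ℕ | 0 < f ∧ ∀ g, χ g ∈ cycField f}

/-- The `p`-rationality level of a complex-valued function: `log_p` of the `p`-part of
its conductor. -/
def plev {G : Type} (p : ℕ) (χ : G → ℂ) : ℕ :=
  (conductorOf χ).factorization p

/-- The `p`-rationality level of a complex number `z`: `log_p` of the `p`-part of the
smallest positive integer `f` with `z ∈ ℚ(ζ_f)`. -/
def zlev (p : ℕ) (z : ℂ) : ℕ :=
  (sInf {f : ℕ | 0 < f ∧ z ∈ cycField f}).factorization p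

/-- `χ : G → ℂ` is a (complex) character of `G`. -/
def IsChar (G : Type) [Group G] (χ : G → ℂ) : Prop :=
  ∃ V : FDRep ℂ G, FDRep.character V = χ

/-- `χ : G → ℂ` is an irreducible (complex) character of `G`. -/
def IsIrrChar (G : Type) [Group G] (χ : G → ℂ) : Prop :=
  ∃ V : FDRep ℂ G, CategoryTheory.Simple V ∧ FDRep.character V = χ

/-- A character has odd degree. -/
def HasOddDegree {G : Type} [Group G] (χ : G → ℂ) : Prop :=
  ∃ d : ℕ, Odd d ∧ χ 1 = (d : ℂ)

/-- A character has degree coprime to `p`. -/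
def DegCoprime {G : Type} [Group G] (p : ℕ) (χ : G → ℂ) : Prop :=
  ∃ d : ℕ, ¬ p ∣ d ∧ χ 1 = (d : ℂ)

/-- The usual inner product of complex class functions on a finite group. -/
def charInner (N : Type) [Fintype N] (f g : N → ℂ) : ℂ :=
  (Fintype.card N : ℂ)⁻¹ * ∑ n, f n * (starRingEnd ℂ) (g n)

/-- The order of the determinant (linear) character of a representation. -/
def detOrder {N : Type} [Group N] (V : FDRep ℂ N) : ℕ :=
  orderOf (MonoidHom.comp LinearMap.det (V.ρ : N →* (V →ₗ[ℂ] V)))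

/-!
All Sylow `p`-subgroups of a group are isomorphic, so we may take `P_G = P` to be a Sylow subgroup
containing `P_N`. Then `P ∩ N = P_N` and the image `PN/N ≅ P/P_N` of `P` is a Sylow subgroup of
`G/N`. Now (i) holds because `P → PN/N` is onto, and (ii) is the bound
`exp(Pᵃᵇ) ∣ exp(P_Nᵃᵇ) · exp((P/P_N)ᵃᵇ)` valid for any group extension.
-/

namespace Abelianization

variable {G H K : Type*} [Group G] [Group H] [Group K]

theorem exponent_dvd_of_surjective (f : G →* H) (hf : Function.Surjective f) :
    Monoid.exponent (Abelianization H) ∣ Monoid.exponent (Abelianization G) :=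
  MonoidHom.exponent_dvd (f := map f) fun y =>
    QuotientGroup.induction_on y fun h =>
      let ⟨g, hg⟩ := hf h
      ⟨of g, by rw [map_of, hg]; rfl⟩

/-- For `a : G`, the power `a ^ exp(Hᵃᵇ)` lies in the image of `K` modulo `[G, G]`, and `exp(Kᵃᵇ)`
kills that image in `Gᵃᵇ`. -/
theorem exponent_dvd_mul_of_ker_le_range (ι : K →* G) (f : G →* H)
    (hf : Function.Surjective f) (hker : f.ker ≤ ι.range) :
    Monoid.exponent (Abelianization G) ∣
      Monoid.exponent (Abelianization K) * Monoid.exponent (Abelianization H) := by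
  set eK := Monoid.exponent (Abelianization K)
  set eH := Monoid.exponent (Abelianization H)
  rw [Monoid.exponent_dvd_iff_forall_pow_eq_one]
  intro x
  induction x using QuotientGroup.induction_on with | H a => ?_
  change of a ^ (eK * eH) = 1
  have hfa : f a ^ eH ∈ (commutator G).map f := by
    rw [_root_.map_commutator_eq, MonoidHom.range_eq_top.mpr hf, ← commutator_def, ← ker_of,
      MonoidHom.mem_ker, map_pow]
    exact Monoid.pow_exponent_eq_one _
  obtain ⟨c, hc, hfc⟩ := hfa
  obtain ⟨k, hk⟩ := hker (show a ^ eH * c⁻¹ ∈ f.ker by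
    rw [MonoidHom.mem_ker, map_mul, map_pow, map_inv, hfc, mul_inv_cancel])
  have hofa : of a ^ eH = map ι (of k) := by
    rw [← ker_of] at hc
    rw [map_of, hk, map_mul, map_pow, map_inv, hc, inv_one, mul_one]
  calc of a ^ (eK * eH) = map ι (of k) ^ eK := by rw [mul_comm, pow_mul, hofa]
    _ = 1 := by rw [← map_pow, Monoid.pow_exponent_eq_one, map_one]

end Abelianization

theorem Sylow.exponent_abelianization_eq {p : ℕ} {G : Type*} [Group G] [Fact p.Prime]
    [Finite (Sylow p G)] (P Q : Sylow p G) :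
    Monoid.exponent (Abelianization P) = Monoid.exponent (Abelianization Q) :=
  Monoid.exponent_eq_of_mulEquiv (P.equiv Q).abelianizationCongr

theorem Sylow.subgroupOf_eq_of_map_subtype_le {p : ℕ} {G : Type*} [Group G] {N : Subgroup G}
    (PN : Sylow p N) {P : Subgroup G} (hP : IsPGroup p P) (hle : PN.map N.subtype ≤ P) :
    P.subgroupOf N = PN :=
  PN.is_maximal' hP.comap_subtype (Subgroup.map_le_iff_le_comap.mp hle)

/-- exponents of abelianizations of Sylow subgroups of `G/N`, `G`, `N`. -/
theorem stmt8 (p : ℕ) (hp : p.Prime) (G : Type) [Group G] [Fintype G]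
    (N : Subgroup G) [N.Normal]
    (PN : Sylow p ↥N) (PG : Sylow p G) (PQ : Sylow p (G ⧸ N)) :
    Monoid.exponent (Abelianization ↥(PQ : Subgroup (G ⧸ N))) ≤
        Monoid.exponent (Abelianization ↥(PG : Subgroup G)) ∧
      Monoid.exponent (Abelianization ↥(PG : Subgroup G)) ≤
        Monoid.exponent (Abelianization ↥(PN : Subgroup ↥N)) *
          Monoid.exponent (Abelianization ↥(PQ : Subgroup (G ⧸ N))) := by
  have : Fact p.Prime := ⟨hp⟩
  obtain ⟨P, hPN⟩ := (PN.2.map N.subtype).exists_le_sylow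
  let π := (QuotientGroup.mk' N).subgroupMap (P : Subgroup G)
  have hπ : Function.Surjective π := (QuotientGroup.mk' N).subgroupMap_surjective P
  let ι : PN →* P := (N.subtype.comp (PN : Subgroup N).subtype).codRestrict P fun s =>
    hPN ⟨s, s.2, rfl⟩
  have hker : π.ker ≤ ι.range := by
    intro x hx
    have hxN : (x : G) ∈ N := (QuotientGroup.eq_one_iff _).mp (congrArg Subtype.val hx)
    have hxPN : (⟨x, hxN⟩ : N) ∈ (PN : Subgroup N) := by
      rw [← PN.subgroupOf_eq_of_map_subtype_le P.2 hPN]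
      exact x.2
    exact ⟨⟨⟨x, hxN⟩, hxPN⟩, rfl⟩
  rw [PG.exponent_abelianization_eq P,
    PQ.exponent_abelianization_eq (P.mapSurjective (QuotientGroup.mk'_surjective N))]
  refine ⟨Nat.le_of_dvd ?_ (Abelianization.exponent_dvd_of_surjective π hπ),
    Nat.le_of_dvd ?_ (Abelianization.exponent_dvd_mul_of_ker_le_range ι π hπ hker)⟩
  all_goals exact NeZero.pos _
end
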